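/- Under the hypotheses of the preceding decay estimate, assume in addition that p₁I ⪯ P(t)⁻¹ ⪯ p₂I for all t ≥ 0 with 0 < p₁ ≤ p₂. Then the estimation error decays exponentially: ‖η̃(t)‖ ≤ √(p₂/p₁) · e^{−q₁p₁ t/2} · ‖η̃(0)‖ for all t ≥ 0. In particular, the origin of the error dynamics η̃̇ = [A₁(t) − P(t)C₁(t)ᵀR(t)⁻¹C₁(t)]η̃ is globally exponentially stable. -/

import Mathlib

/-!
The Lyapunov function is `V = η̃ᵀ P⁻¹ η̃`. Since `d/dt P⁻¹ = -P⁻¹ Ṗ P⁻¹`, the Riccati equation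
makes the `A₁`-terms cancel in `V̇`, leaving
`V̇ = -η̃ᵀ (P⁻¹ Q P⁻¹ + C₁ᵀ R⁻¹ C₁) η̃ ≤ -q₁ ‖P⁻¹ η̃‖² ≤ -q₁ p₁ V`, the last step because `P⁻¹`
commutes with `P⁻¹ - p₁ I ⪰ 0`. Grönwall gives `V t ≤ e^{-q₁ p₁ t} V 0`, and
`p₁ ‖η̃‖² ≤ V ≤ p₂ ‖η̃‖²` turns this into the bound on `‖η̃‖`.
-/

open Matrix

noncomputable section

/-- The Euclidean norm of a vector in `ℝ^m`. -/
def euclNorm {m : ℕ} (x : Fin m → ℝ) : ℝ := Real.sqrt (x ⬝ᵥ x)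

section MatrixCalculus

variable {𝕜 : Type*} [RCLike 𝕜] {n : Type*} [Fintype n] [DecidableEq n]

-- Any norm would do; the `L∞` operator norm makes `Matrix n n 𝕜` a complete normed algebra, where
-- `Ring.inverse` is known to be differentiable.
attribute [local instance] Matrix.linftyOpNormedAddCommGroup Matrix.linftyOpNormedSpace
  Matrix.linftyOpNormedRing Matrix.linftyOpNormedAlgebra

theorem Matrix.hasDerivAt_of_hasDerivAt_apply {P : 𝕜 → Matrix n n 𝕜} {P' : Matrix n n 𝕜}
    {t : 𝕜} (h : ∀ i j, HasDerivAt (fun s => P s i j) (P' i j) t) : HasDerivAt P P' t := by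
  have hsum := HasDerivAt.fun_sum (u := Finset.univ) fun i _ =>
    HasDerivAt.fun_sum (u := Finset.univ) fun j _ => (h i j).smul_const (single i j (1 : 𝕜))
  simp only [smul_single, smul_eq_mul, mul_one, ← matrix_eq_sum_single] at hsum
  exact hsum

omit [DecidableEq n] in
theorem HasDerivAt.matrix_apply {P : 𝕜 → Matrix n n 𝕜} {P' : Matrix n n 𝕜} {t : 𝕜}
    (h : HasDerivAt P P' t) (i j : n) : HasDerivAt (fun s => P s i j) (P' i j) t :=
  (LinearMap.toContinuousLinearMap (entryLinearMap 𝕜 𝕜 i j)).hasFDerivAt.comp_hasDerivAt t h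

theorem HasDerivAt.matrix_inv {P : 𝕜 → Matrix n n 𝕜} {P' : Matrix n n 𝕜} {t : 𝕜}
    (h : HasDerivAt P P' t) (hP : IsUnit (P t).det) :
    HasDerivAt (fun s => (P s)⁻¹) (-((P t)⁻¹ * P' * (P t)⁻¹)) t := by
  have hu : IsUnit (P t) := (isUnit_iff_isUnit_det _).2 hP
  have hinv : (fun s => (P s)⁻¹) = Ring.inverse ∘ P :=
    funext fun s => nonsing_inv_eq_ringInverse _
  have hderiv : -((P t)⁻¹ * P' * (P t)⁻¹) =
      (-ContinuousLinearMap.mulLeftRight 𝕜 _ ↑hu.unit⁻¹ ↑hu.unit⁻¹) P' := by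
    simp [nonsing_inv_eq_ringInverse]
  rw [hinv, hderiv]
  exact (hasFDerivAt_ringInverse hu.unit).comp_hasDerivAt t h

theorem Matrix.hasDerivAt_inv_apply {P : 𝕜 → Matrix n n 𝕜} {P' : Matrix n n 𝕜} {t : 𝕜}
    (h : ∀ i j, HasDerivAt (fun s => P s i j) (P' i j) t) (hP : IsUnit (P t).det) (i j : n) :
    HasDerivAt (fun s => (P s)⁻¹ i j) ((-((P t)⁻¹ * P' * (P t)⁻¹)) i j) t :=
  ((hasDerivAt_of_hasDerivAt_apply h).matrix_inv hP).matrix_apply i j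

end MatrixCalculus

section QuadraticForm

variable {𝕜 : Type*} [NontriviallyNormedField 𝕜] {n : Type*} [Fintype n] {t : 𝕜}

theorem HasDerivAt.dotProduct {x y : 𝕜 → n → 𝕜} {x' y' : n → 𝕜}
    (hx : HasDerivAt x x' t) (hy : HasDerivAt y y' t) :
    HasDerivAt (fun s => x s ⬝ᵥ y s) (x' ⬝ᵥ y t + x t ⬝ᵥ y') t := by
  have := HasDerivAt.fun_sum (u := Finset.univ) fun i _ =>
    (hasDerivAt_pi.1 hx i).fun_mul (hasDerivAt_pi.1 hy i)
  simp only [Finset.sum_add_distrib] at this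
  exact this

theorem Matrix.hasDerivAt_mulVec {m : Type*} {N : 𝕜 → Matrix m n 𝕜} {N' : Matrix m n 𝕜}
    {y : 𝕜 → n → 𝕜} {y' : n → 𝕜}
    (hN : ∀ i j, HasDerivAt (fun s => N s i j) (N' i j) t) (hy : HasDerivAt y y' t) :
    HasDerivAt (fun s => N s *ᵥ y s) (N' *ᵥ y t + N t *ᵥ y') t :=
  hasDerivAt_pi.2 fun i => (hasDerivAt_pi.2 (hN i)).dotProduct hy

theorem Matrix.hasDerivAt_dotProduct_mulVec_of_hasDerivAt_eq_mulVec {x : 𝕜 → n → 𝕜}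
    {N : 𝕜 → Matrix n n 𝕜} {F N' : Matrix n n 𝕜}
    (hN : ∀ i j, HasDerivAt (fun s => N s i j) (N' i j) t) (hx : HasDerivAt x (F *ᵥ x t) t) :
    HasDerivAt (fun s => x s ⬝ᵥ (N s *ᵥ x s)) (x t ⬝ᵥ ((Fᵀ * N t + N' + N t * F) *ᵥ x t)) t := by
  have hF : x t ⬝ᵥ (Fᵀ *ᵥ (N t *ᵥ x t)) = (F *ᵥ x t) ⬝ᵥ (N t *ᵥ x t) := by
    rw [dotProduct_mulVec, vecMul_transpose]
  convert hx.dotProduct (hasDerivAt_mulVec hN hx) using 1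
  simp only [add_mulVec, dotProduct_add, ← mulVec_mulVec, hF, add_assoc]

end QuadraticForm

theorem Matrix.riccati_lyapunov_identity {α : Type*} [CommRing α] {n k : Type*} [Fintype n]
    [DecidableEq n] [Fintype k] [DecidableEq k] (A P Q : Matrix n n α) (C : Matrix k n α)
    (R : Matrix k k α) (hP : IsUnit P.det) (hPs : P.IsSymm) (hRs : R.IsSymm) :
    (A - P * Cᵀ * R⁻¹ * C)ᵀ * P⁻¹ + -(P⁻¹ * (A * P + P * Aᵀ + Q - P * Cᵀ * R⁻¹ * C * P) * P⁻¹)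
        + P⁻¹ * (A - P * Cᵀ * R⁻¹ * C) = -(P⁻¹ * Q * P⁻¹ + Cᵀ * R⁻¹ * C) := by
  have hRinv : (R⁻¹)ᵀ = R⁻¹ := by rw [transpose_nonsing_inv, hRs.eq]
  simp only [transpose_sub, transpose_mul, transpose_transpose, hRinv, hPs.eq, mul_add, add_mul,
    mul_sub, sub_mul, Matrix.mul_assoc, mul_nonsing_inv _ hP, Matrix.mul_one,
    nonsing_inv_mul_cancel_left (h := hP)]
  abel

section PosSemidef

variable {n : Type*} [Fintype n]

theorem Matrix.PosSemidef.dotProduct_mulVec_le_of_sub {A B : Matrix n n ℝ} (h : (B - A).PosSemidef)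
    (x : n → ℝ) : x ⬝ᵥ (A *ᵥ x) ≤ x ⬝ᵥ (B *ᵥ x) := by
  simpa [sub_mulVec] using h.dotProduct_mulVec_nonneg x

theorem Matrix.IsSymm.dotProduct_mulVec_comm {M : Matrix n n ℝ} (hM : M.IsSymm) (x y : n → ℝ) :
    x ⬝ᵥ (M *ᵥ y) = (M *ᵥ x) ⬝ᵥ y := by
  rw [dotProduct_mulVec, ← mulVec_transpose, hM.eq]

variable [DecidableEq n]

theorem Matrix.PosSemidef.mul_dotProduct_self_le {M : Matrix n n ℝ} {a : ℝ}
    (h : (M - a • 1).PosSemidef) (x : n → ℝ) : a * (x ⬝ᵥ x) ≤ x ⬝ᵥ (M *ᵥ x) := by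
  simpa only [smul_mulVec, one_mulVec, dotProduct_smul, smul_eq_mul]
    using h.dotProduct_mulVec_le_of_sub x

theorem Matrix.PosSemidef.dotProduct_mulVec_le_mul_dotProduct_self {M : Matrix n n ℝ} {a : ℝ}
    (h : (a • 1 - M).PosSemidef) (x : n → ℝ) : x ⬝ᵥ (M *ᵥ x) ≤ a * (x ⬝ᵥ x) := by
  simpa only [smul_mulVec, one_mulVec, dotProduct_smul, smul_eq_mul]
    using h.dotProduct_mulVec_le_of_sub x

open scoped MatrixOrder in
theorem Matrix.PosSemidef.mul_self_sub_smul {N : Matrix n n ℝ} {p : ℝ} (hN : N.PosSemidef)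
    (hNp : (N - p • 1).PosSemidef) : (N * N - p • N).PosSemidef := by
  have hcomm : Commute N (N - p • 1) :=
    (Commute.refl N).sub_right ((Commute.one_right N).smul_right p)
  have := (hcomm.mul_nonneg hN.nonneg hNp.nonneg).posSemidef
  rwa [mul_sub, mul_smul_comm, mul_one] at this

theorem Matrix.PosSemidef.mul_dotProduct_mulVec_le_conj_add {N Q G : Matrix n n ℝ} {p q : ℝ}
    (hq : 0 ≤ q) (hN : N.PosSemidef) (hNp : (N - p • 1).PosSemidef) (hQ : (Q - q • 1).PosSemidef)
    (hG : G.PosSemidef) (x : n → ℝ) :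
    q * p * (x ⬝ᵥ (N *ᵥ x)) ≤ x ⬝ᵥ ((N * Q * N + G) *ᵥ x) := by
  have hNs : N.IsSymm := isHermitian_iff_isSymm.1 hN.isHermitian
  have hNN : p * (x ⬝ᵥ (N *ᵥ x)) ≤ (N *ᵥ x) ⬝ᵥ (N *ᵥ x) := by
    simpa [smul_mulVec, ← mulVec_mulVec, hNs.dotProduct_mulVec_comm x]
      using (hN.mul_self_sub_smul hNp).dotProduct_mulVec_le_of_sub x
  have hQN : q * ((N *ᵥ x) ⬝ᵥ (N *ᵥ x)) ≤ (N *ᵥ x) ⬝ᵥ (Q *ᵥ (N *ᵥ x)) :=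
    hQ.mul_dotProduct_self_le (N *ᵥ x)
  have hGx : 0 ≤ x ⬝ᵥ (G *ᵥ x) := by simpa using hG.dotProduct_mulVec_nonneg x
  have hNQN : x ⬝ᵥ ((N * Q * N) *ᵥ x) = (N *ᵥ x) ⬝ᵥ (Q *ᵥ (N *ᵥ x)) := by
    rw [← mulVec_mulVec, ← mulVec_mulVec, hNs.dotProduct_mulVec_comm]
  rw [add_mulVec, dotProduct_add, hNQN, mul_assoc]
  nlinarith [mul_le_mul_of_nonneg_left hNN hq]

end PosSemidef

theorem le_mul_exp_of_hasDerivAt_le_mul {V V' : ℝ → ℝ} {K a t : ℝ}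
    (hV : ∀ s, HasDerivAt V (V' s) s) (hle : ∀ s, a ≤ s → V' s ≤ K * V s) (ht : a ≤ t) :
    V t ≤ V a * Real.exp (K * (t - a)) := by
  have := le_gronwallBound_of_liminf_deriv_right_le (f := V) (f' := V') (ε := 0) (b := t)
    (fun s _ => (hV s).continuousAt.continuousWithinAt)
    (fun s _ r hr => by
      simpa only [slope, vsub_eq_sub, smul_eq_mul] using
        (hV s).hasDerivWithinAt.liminf_right_slope_le hr)
    le_rfl (fun s hs => by simpa using hle s hs.1) t ⟨ht, le_rfl⟩
  rwa [gronwallBound_ε0] at this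

theorem euclNorm_le_of_mul_dotProduct_self_le {m : ℕ} {x y : Fin m → ℝ} {a b c : ℝ} (ha : 0 < a)
    (h : a * (x ⬝ᵥ x) ≤ b * Real.exp c * (y ⬝ᵥ y)) :
    euclNorm x ≤ Real.sqrt (b / a) * Real.exp (c / 2) * euclNorm y := by
  have hy : 0 ≤ y ⬝ᵥ y := Finset.sum_nonneg fun i _ => mul_self_nonneg (y i)
  calc euclNorm x ≤ Real.sqrt (b / a * Real.exp c * (y ⬝ᵥ y)) := by
        refine Real.sqrt_le_sqrt ?_
        rw [mul_assoc, div_mul_eq_mul_div, le_div_iff₀ ha, ← mul_assoc]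
        linarith
    _ = Real.sqrt (b / a) * Real.exp (c / 2) * euclNorm y := by
        rw [Real.sqrt_mul' _ hy, Real.sqrt_mul' _ (Real.exp_pos c).le, ← Real.exp_half]
        rfl

theorem ekf_error_exponential_decay_general
    {m p : ℕ} (q₁ p₁ p₂ : ℝ) (hq₁ : 0 < q₁) (hp₁ : 0 < p₁)
    (A₁ : ℝ → Matrix (Fin m) (Fin m) ℝ) (C₁ : ℝ → Matrix (Fin p) (Fin m) ℝ)
    (Q : ℝ → Matrix (Fin m) (Fin m) ℝ) (R : ℝ → Matrix (Fin p) (Fin p) ℝ)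
    (P P' : ℝ → Matrix (Fin m) (Fin m) ℝ)
    (η : ℝ → Fin m → ℝ)
    (hP : ∀ t, (P t).PosDef)
    (hQ : ∀ t, (Q t - q₁ • (1 : Matrix (Fin m) (Fin m) ℝ)).PosSemidef)
    (hR : ∀ t, (R t).PosDef)
    (hPinvLow : ∀ t, 0 ≤ t → ((P t)⁻¹ - p₁ • (1 : Matrix (Fin m) (Fin m) ℝ)).PosSemidef)
    (hPinvUp : ∀ t, 0 ≤ t → (p₂ • (1 : Matrix (Fin m) (Fin m) ℝ) - (P t)⁻¹).PosSemidef)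
    (hPdiff : ∀ t i j, HasDerivAt (fun s => P s i j) (P' t i j) t)
    (hRic : ∀ t, P' t =
      A₁ t * P t + P t * (A₁ t)ᵀ + Q t - P t * (C₁ t)ᵀ * (R t)⁻¹ * C₁ t * P t)
    (hη : ∀ t, HasDerivAt η ((A₁ t - P t * (C₁ t)ᵀ * (R t)⁻¹ * C₁ t) *ᵥ η t) t) :
    ∀ t, 0 ≤ t →
      euclNorm (η t) ≤
        Real.sqrt (p₂ / p₁) * Real.exp (-(q₁ * p₁ * t) / 2) * euclNorm (η 0) := by
  intro t ht
  set V : ℝ → ℝ := fun s => η s ⬝ᵥ ((P s)⁻¹ *ᵥ η s)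
  set G : ℝ → Matrix (Fin m) (Fin m) ℝ :=
    fun s => (P s)⁻¹ * Q s * (P s)⁻¹ + (C₁ s)ᵀ * (R s)⁻¹ * C₁ s
  have hV : ∀ s, HasDerivAt V (-(η s ⬝ᵥ (G s *ᵥ η s))) s := fun s => by
    have hdet : IsUnit (P s).det := (hP s).det_pos.ne'.isUnit
    have := hasDerivAt_dotProduct_mulVec_of_hasDerivAt_eq_mulVec
      (hasDerivAt_inv_apply (hPdiff s) hdet) (hη s)
    rwa [hRic s, riccati_lyapunov_identity _ _ _ _ _ hdet
      (isHermitian_iff_isSymm.1 (hP s).isHermitian) (isHermitian_iff_isSymm.1 (hR s).isHermitian),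
      neg_mulVec, dotProduct_neg] at this
  have hV_le : ∀ s, 0 ≤ s → -(η s ⬝ᵥ (G s *ᵥ η s)) ≤ -(q₁ * p₁) * V s := fun s hs => by
    have hCRC : ((C₁ s)ᵀ * (R s)⁻¹ * C₁ s).PosSemidef := by
      simpa using (hR s).inv.posSemidef.conjTranspose_mul_mul_same (C₁ s)
    have := (hP s).inv.posSemidef.mul_dotProduct_mulVec_le_conj_add hq₁.le (hPinvLow s hs)
      (hQ s) hCRC (η s)
    linarith
  have hdecay := le_mul_exp_of_hasDerivAt_le_mul hV hV_le ht
  have hlow : p₁ * (η t ⬝ᵥ η t) ≤ V t := (hPinvLow t ht).mul_dotProduct_self_le (η t)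
  have hup : V 0 ≤ p₂ * (η 0 ⬝ᵥ η 0) :=
    (hPinvUp 0 le_rfl).dotProduct_mulVec_le_mul_dotProduct_self (η 0)
  refine euclNorm_le_of_mul_dotProduct_self_le hp₁ ?_
  rw [sub_zero, neg_mul] at hdecay
  nlinarith [Real.exp_pos (-(q₁ * p₁ * t))]

/-- Under the EKF Lyapunov decay estimate hypotheses, if additionally
`p₁I ⪯ P(t)⁻¹ ⪯ p₂I` for all `t ≥ 0`, the estimation error decays exponentially:
`‖η̃(t)‖ ≤ √(p₂/p₁)·e^{−q₁p₁t/2}·‖η̃(0)‖`, i.e. the origin of the error dynamics is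
globally exponentially stable. -/
theorem ekf_error_exponential_decay
    {m p : ℕ} (q₁ p₁ p₂ : ℝ) (hq₁ : 0 < q₁) (hp₁ : 0 < p₁) (hp₂ : p₁ ≤ p₂)
    (A₁ : ℝ → Matrix (Fin m) (Fin m) ℝ) (C₁ : ℝ → Matrix (Fin p) (Fin m) ℝ)
    (Q : ℝ → Matrix (Fin m) (Fin m) ℝ) (R : ℝ → Matrix (Fin p) (Fin p) ℝ)
    (P P' : ℝ → Matrix (Fin m) (Fin m) ℝ)
    (η : ℝ → Fin m → ℝ)
    (hP : ∀ t, (P t).PosDef)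
    (hQsymm : ∀ t, (Q t).IsSymm)
    (hQ : ∀ t, (Q t - q₁ • (1 : Matrix (Fin m) (Fin m) ℝ)).PosSemidef)
    (hR : ∀ t, (R t).PosDef)
    (hPinvLow : ∀ t, 0 ≤ t → ((P t)⁻¹ - p₁ • (1 : Matrix (Fin m) (Fin m) ℝ)).PosSemidef)
    (hPinvUp : ∀ t, 0 ≤ t → (p₂ • (1 : Matrix (Fin m) (Fin m) ℝ) - (P t)⁻¹).PosSemidef)
    (hPdiff : ∀ t i j, HasDerivAt (fun s => P s i j) (P' t i j) t)
    (hRic : ∀ t, P' t =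
      A₁ t * P t + P t * (A₁ t)ᵀ + Q t - P t * (C₁ t)ᵀ * (R t)⁻¹ * C₁ t * P t)
    (hη : ∀ t, HasDerivAt η ((A₁ t - P t * (C₁ t)ᵀ * (R t)⁻¹ * C₁ t) *ᵥ η t) t) :
    ∀ t, 0 ≤ t →
      euclNorm (η t) ≤
        Real.sqrt (p₂ / p₁) * Real.exp (-(q₁ * p₁ * t) / 2) * euclNorm (η 0) :=
  ekf_error_exponential_decay_general q₁ p₁ p₂ hq₁ hp₁ A₁ C₁ Q R P P' η hP hQ hR hPinvLow hPinvUp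
    hPdiff hRic hη
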